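/- arXiv:1512.05384 — 7 statements merged into one kernel-verified Lean document; each statement's English description precedes it below -/
import Mathlib

section
/- An n×n complex matrix A is a product of two positive semidefinite matrices if and only if A is similar to a diagonal matrix with nonnegative diagonal entries. -/
open scoped ComplexOrder Matrix

open Matrix Module Module.End

/-!
For `A = P * Q`, the form `⟪x, y⟫ = star x ⬝ᵥ Q *ᵥ y` is positive semidefinite and `A` is
self-adjoint for it. If `A v = μ v` with `v ≠ 0`, then `μ ⟪v, v⟫ = star (Q v) ⬝ᵥ P *ᵥ (Q v) ≥ 0`,
so `μ ≥ 0` unless `Q v = 0`, in which case `μ = 0`. Self-adjointness also excludes Jordan blocks: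
if `u = (A - μ) v` satisfies `A u = μ u`, then `⟪u, u⟫ = ⟪v, (A - μ) u⟫ = 0`, so `Q u = 0` and
`A u = 0`; thus `u ≠ 0` forces `μ = 0`, and then `u = P (Q v)` with
`star (Q v) ⬝ᵥ P *ᵥ (Q v) = ⟪v, u⟫ = 0`, so `u = 0` after all. Hence `A` is diagonalizable with
nonnegative eigenvalues. Conversely, `S D S⁻¹ = (S Sᴴ) ((S⁻¹)ᴴ D S⁻¹)`.
-/

namespace Module.End

variable {K V : Type*} [Field K] [AddCommGroup V] [Module K V] {f : End K V}

theorem maxGenEigenspace_eq_eigenspace_of_genEigenspace_two_le {μ : K}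
    (h : f.genEigenspace μ 2 ≤ f.eigenspace μ) : f.maxGenEigenspace μ = f.eigenspace μ := by
  refine le_antisymm (fun v hv => ?_) eigenspace_le_maxGenEigenspace
  obtain ⟨k, hk⟩ := (mem_maxGenEigenspace f μ v).mp hv
  have hstable : LinearMap.ker ((f - μ • 1) ^ 1) = LinearMap.ker ((f - μ • 1) ^ 2) := by
    refine le_antisymm (LinearMap.ker_le_ker_comp _ _) ?_
    rwa [← Nat.cast_two, genEigenspace_nat, eigenspace_def, ← pow_one (f - μ • 1)] at h
  rw [eigenspace_def, ← pow_one (f - μ • 1), ker_pow_constant hstable k, pow_add,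
    LinearMap.mem_ker, mul_apply, hk, map_zero]

theorem exists_basis_mem_eigenspace {ι : Type*} (h : ⨆ μ, f.eigenspace μ = ⊤)
    (b₀ : Basis ι K V) : ∃ (b : Basis ι K V) (d : ι → K), ∀ i, b i ∈ f.eigenspace (d i) := by
  classical
  have hint : DirectSum.IsInternal f.eigenspace :=
    DirectSum.isInternal_submodule_of_iSupIndep_of_iSup_eq_top f.eigenspaces_iSupIndep h
  let B := hint.collectedBasis fun μ => Basis.ofVectorSpace K (f.eigenspace μ)
  exact ⟨B.reindex (B.indexEquiv b₀), fun i => ((B.indexEquiv b₀).symm i).1,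
    fun i => by rw [Basis.reindex_apply]; exact hint.collectedBasis_mem _ _⟩

end Module.End

namespace Matrix

variable {ι : Type*} [Fintype ι]

lemma IsHermitian.star_mul_mulVec_dotProduct_mulVec {R : Type*} [CommRing R] [StarRing R]
    {P Q : Matrix ι ι R} (hP : P.IsHermitian) (hQ : Q.IsHermitian) (x y : ι → R) :
    star ((P * Q) *ᵥ x) ⬝ᵥ Q *ᵥ y = star x ⬝ᵥ Q *ᵥ ((P * Q) *ᵥ y) := by
  rw [star_mulVec, ← dotProduct_mulVec, conjTranspose_mul, hP.eq, hQ.eq, mulVec_mulVec,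
    mulVec_mulVec, Matrix.mul_assoc]

variable {𝕜 : Type*} [RCLike 𝕜] {P Q : Matrix ι ι 𝕜}

lemma PosSemidef.nonneg_of_mul_mulVec_eq_smul (hP : P.PosSemidef) (hQ : Q.PosSemidef) {μ : 𝕜}
    {v : ι → 𝕜} (hv : v ≠ 0) (hμ : (P * Q) *ᵥ v = μ • v) : 0 ≤ μ := by
  by_cases hQv : Q *ᵥ v = 0
  · have : μ • v = 0 := by rw [← hμ, ← mulVec_mulVec, hQv, mulVec_zero]
    exact ((smul_eq_zero.mp this).resolve_right hv).ge
  have hpos : 0 < star v ⬝ᵥ Q *ᵥ v :=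
    (hQ.dotProduct_mulVec_nonneg v).lt_of_ne' (mt (hQ.dotProduct_mulVec_zero_iff v).mp hQv)
  have key : star (Q *ᵥ v) ⬝ᵥ P *ᵥ (Q *ᵥ v) = μ * (star v ⬝ᵥ Q *ᵥ v) := by
    rw [star_mulVec, ← dotProduct_mulVec, hQ.isHermitian.eq, mulVec_mulVec _ P, hμ, mulVec_smul,
      dotProduct_smul, smul_eq_mul]
  have hnn := hP.dotProduct_mulVec_nonneg (Q *ᵥ v)
  rw [key] at hnn
  simpa [hpos.ne'] using mul_nonneg hnn (inv_nonneg.mpr hpos.le)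

lemma PosSemidef.mul_mulVec_sub_smul_eq_zero (hP : P.PosSemidef) (hQ : Q.PosSemidef) {μ : 𝕜}
    {v : ι → 𝕜} (h : (P * Q) *ᵥ ((P * Q) *ᵥ v - μ • v) = μ • ((P * Q) *ᵥ v - μ • v)) :
    (P * Q) *ᵥ v - μ • v = 0 := by
  set u := (P * Q) *ᵥ v - μ • v with hu
  by_contra hu0
  have hμ : star μ = μ := (hP.nonneg_of_mul_mulVec_eq_smul hQ hu0 h).isSelfAdjoint.star_eq
  have hQu : Q *ᵥ u = 0 := by
    rw [← hQ.dotProduct_mulVec_zero_iff]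
    calc star u ⬝ᵥ Q *ᵥ u = star ((P * Q) *ᵥ v) ⬝ᵥ Q *ᵥ u - star (μ • v) ⬝ᵥ Q *ᵥ u := by
          rw [hu, star_sub, sub_dotProduct]
      _ = 0 := by
          rw [hP.isHermitian.star_mul_mulVec_dotProduct_mulVec hQ.isHermitian, h, star_smul, hμ,
            mulVec_smul, dotProduct_smul, smul_dotProduct, sub_self]
  have hμ0 : μ = 0 := by
    rw [← mulVec_mulVec, hQu, mulVec_zero, eq_comm, smul_eq_zero] at h
    exact h.resolve_right hu0
  have hPQv : P *ᵥ (Q *ᵥ v) = 0 := by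
    rw [← hP.dotProduct_mulVec_zero_iff, star_mulVec, ← dotProduct_mulVec, hQ.isHermitian.eq,
      mulVec_mulVec _ P]
    simpa [hu, hμ0] using congrArg (star v ⬝ᵥ ·) hQu
  exact hu0 (by simpa [hu, hμ0, mulVec_mulVec] using hPQv)

variable [DecidableEq ι]

lemma PosSemidef.nonneg_of_hasEigenvalue_toLin'_mul (hP : P.PosSemidef) (hQ : Q.PosSemidef)
    {μ : 𝕜} (h : HasEigenvalue (toLin' (P * Q)) μ) : 0 ≤ μ := by
  obtain ⟨v, hv⟩ := h.exists_hasEigenvector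
  exact hP.nonneg_of_mul_mulVec_eq_smul hQ hv.2 (by simpa using hv.apply_eq_smul)

lemma PosSemidef.maxGenEigenspace_toLin'_mul_eq_eigenspace (hP : P.PosSemidef)
    (hQ : Q.PosSemidef) (μ : 𝕜) :
    maxGenEigenspace (toLin' (P * Q)) μ = eigenspace (toLin' (P * Q)) μ := by
  refine maxGenEigenspace_eq_eigenspace_of_genEigenspace_two_le fun v hv => ?_
  rw [← Nat.cast_two, mem_genEigenspace_nat, LinearMap.mem_ker, sq, Module.End.mul_apply] at hv
  rw [eigenspace_def, LinearMap.mem_ker]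
  simp only [LinearMap.sub_apply, LinearMap.smul_apply, toLin'_apply] at hv ⊢
  exact hP.mul_mulVec_sub_smul_eq_zero hQ (sub_eq_zero.mp hv)

theorem mul_toMatrix_eq_toMatrix_mul_diagonal {K : Type*} [CommRing K] {A : Matrix ι ι K}
    {b : Basis ι K (ι → K)} {d : ι → K} (h : ∀ i, A *ᵥ b i = d i • b i) :
    A * (Pi.basisFun K ι).toMatrix b = (Pi.basisFun K ι).toMatrix b * diagonal d := by
  ext i j
  rw [mul_diagonal]
  simpa [Matrix.mul_apply, mulVec, dotProduct, Basis.toMatrix_apply, mul_comm] using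
    congrFun (h j) i

theorem exists_isUnit_eq_mul_diagonal_mul_inv {K : Type*} [Field K] {A : Matrix ι ι K}
    (h : ⨆ μ, eigenspace (toLin' A) μ = ⊤) :
    ∃ S : Matrix ι ι K, IsUnit S ∧ ∃ d : ι → K, (∀ i, HasEigenvalue (toLin' A) (d i)) ∧
      A = S * diagonal d * S⁻¹ := by
  obtain ⟨b, d, hb⟩ := exists_basis_mem_eigenspace h (Pi.basisFun K ι)
  have hAS := mul_toMatrix_eq_toMatrix_mul_diagonal (A := A) fun i => by
    simpa using mem_eigenspace_iff.mp (hb i)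
  let _ := (Pi.basisFun K ι).invertibleToMatrix b
  refine ⟨(Pi.basisFun K ι).toMatrix b, isUnit_of_invertible _, d,
    fun i => hasEigenvalue_of_hasEigenvector ⟨hb i, b.ne_zero i⟩, ?_⟩
  rw [← hAS, Matrix.mul_assoc, mul_inv_of_invertible, Matrix.mul_one]

theorem mul_mul_inv_eq_mul_conjTranspose_mul {R : Type*} [CommRing R] [StarRing R]
    {S : Matrix ι ι R} (hS : IsUnit S) (D : Matrix ι ι R) :
    S * D * S⁻¹ = S * Sᴴ * ((S⁻¹)ᴴ * D * S⁻¹) := by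
  rw [Matrix.mul_assoc S Sᴴ, ← Matrix.mul_assoc Sᴴ, ← Matrix.mul_assoc Sᴴ, ← conjTranspose_mul,
    nonsing_inv_mul _ ((isUnit_iff_isUnit_det S).mp hS), conjTranspose_one, Matrix.one_mul,
    Matrix.mul_assoc]

end Matrix

/-- A ∈ M_n(ℂ) is a product of two positive semidefinite matrices iff
A is similar to a diagonal matrix with nonnegative diagonal entries. -/
theorem stmt0 (n : ℕ) (A : Matrix (Fin n) (Fin n) ℂ) :
    (∃ P Q : Matrix (Fin n) (Fin n) ℂ, P.PosSemidef ∧ Q.PosSemidef ∧ A = P * Q) ↔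
    (∃ S : Matrix (Fin n) (Fin n) ℂ, IsUnit S ∧ ∃ d : Fin n → ℝ, (∀ i, 0 ≤ d i) ∧
      A = S * Matrix.diagonal (fun i => (d i : ℂ)) * S⁻¹) := by
  constructor
  · rintro ⟨P, Q, hP, hQ, rfl⟩
    have hdiag : ⨆ μ, eigenspace (toLin' (P * Q)) μ = ⊤ := by
      simpa only [hP.maxGenEigenspace_toLin'_mul_eq_eigenspace hQ] using
        iSup_maxGenEigenspace_eq_top (toLin' (P * Q))
    obtain ⟨S, hS, d, hd, hPQ⟩ := exists_isUnit_eq_mul_diagonal_mul_inv hdiag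
    choose r hr0 hr using fun i =>
      RCLike.nonneg_iff_exists_ofReal.mp (hP.nonneg_of_hasEigenvalue_toLin'_mul hQ (hd i))
    refine ⟨S, hS, r, hr0, ?_⟩
    rwa [show d = fun i => (r i : ℂ) from funext fun i => (hr i).symm] at hPQ
  · rintro ⟨S, hS, d, hd, rfl⟩
    exact ⟨_, _, posSemidef_self_mul_conjTranspose S,
      (PosSemidef.diagonal fun i => by simpa using hd i).conjTranspose_mul_mul_same S⁻¹,
      mul_mul_inv_eq_mul_conjTranspose_mul hS _⟩
end

section
/- The matrix A = (1/25)·[[9, 3],[0, 16]] is a contraction similar to diag(9/25, 16/25) but is not the product of two positive semidefinite contractions. -/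
open scoped ComplexOrder Matrix

open scoped Matrix.Norms.L2Operator

/-!
Diagonalize `A = S D S⁻¹` with `S = !![1, 3; 0, 7]`, `D = diagonal ![9/25, 16/25]`, and let
`T = 7 (S⁻¹)ᴴ`, whose columns are eigenvectors of `Aᴴ`. If `A = P Q` with `P`, `Q` Hermitian, then
`A P = P Q P = P Aᴴ` and `Aᴴ Q = Q A`; as `D` has distinct real entries this forces
`Tᴴ P T = diagonal p` and `Sᴴ Q S = diagonal q`, and `A = P Q` then gives `p i * q i = 49 * D i i`.
If `P`, `Q` are positive contractions then `p, q ≥ 0`, and testing `P ≤ 1` at `T ![1, 10]` and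
`Q ≤ 1` at `S ![6, -1]` gives `p₀ + 100 p₁ ≤ 98` and `36 q₀ + q₁ ≤ 58`. By Cauchy–Schwarz the
product of the left-hand sides is at least `(6 √(p₀ q₀) + 10 √(p₁ q₁))² = (406/5)² > 98 · 58`.
-/

open Matrix

namespace Matrix

section

variable {n : Type*} [Fintype n]

theorem commute_conjTranspose_mul_mul {R : Type*} [CommRing R] [StarRing R]
    {A B S D : Matrix n n R} (hD : Dᴴ = D) (hAS : A * S = S * D) (hB : Aᴴ * B = B * A) :
    Commute D (Sᴴ * B * S) :=
  calc D * (Sᴴ * B * S) = (A * S)ᴴ * B * S := by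
        rw [hAS, conjTranspose_mul, hD, Matrix.mul_assoc, Matrix.mul_assoc, Matrix.mul_assoc]
    _ = Sᴴ * B * S * D := by
        rw [conjTranspose_mul, Matrix.mul_assoc Sᴴ, hB, Matrix.mul_assoc, Matrix.mul_assoc, hAS,
          Matrix.mul_assoc, Matrix.mul_assoc]

variable [DecidableEq n]

theorem l2_opNorm_single {𝕜 : Type*} [RCLike 𝕜] (i j : n) (c : 𝕜) : ‖single i j c‖ = ‖c‖ := by
  have h : ‖single i j c‖ * ‖single i j c‖ = ‖c‖ * ‖c‖ := by
    rw [← l2_opNorm_conjTranspose_mul_self, conjTranspose_single, single_mul_single_same,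
      ← diagonal_single, l2_opNorm_diagonal, Pi.norm_single, norm_mul, norm_star]
  exact (mul_self_inj (norm_nonneg _) (norm_nonneg _)).1 h

theorem isDiag_of_commute_diagonal {R : Type*} [CommRing R] [NoZeroDivisors R] {d : n → R}
    (hd : Function.Injective d) {M : Matrix n n R} (h : Commute (diagonal d) M) : M.IsDiag := by
  intro i j hij
  have hentry := congr_fun₂ h.eq i j
  simp only [diagonal_mul, mul_diagonal] at hentry
  exact (mul_eq_zero.1 (by linear_combination hentry : (d i - d j) * M i j = 0)).resolve_left
    (sub_ne_zero.2 (hd.ne hij))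

end

theorem PosSemidef.exists_diagonal_ofReal {n : Type*} [DecidableEq n] {M : Matrix n n ℂ}
    (hM : M.PosSemidef) (hdiag : M.IsDiag) :
    ∃ d : n → ℝ, 0 ≤ d ∧ M = diagonal fun i ↦ (d i : ℂ) := by
  refine ⟨fun i ↦ (M i i).re, fun i ↦ (Complex.nonneg_iff.1 hM.diag_nonneg).1, ?_⟩
  conv_lhs => rw [← hdiag.diagonal_diag]
  congr 1
  funext i
  exact Complex.ext rfl (Complex.nonneg_iff.1 hM.diag_nonneg).2.symm

theorem PosSemidef.one_sub_of_norm_le_one {n : Type*} [Fintype n] [DecidableEq n]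
    {M : Matrix n n ℂ} (hM : M.PosSemidef) (hM1 : ‖M‖ ≤ 1) : (1 - M).PosSemidef := by
  open scoped MatrixOrder in
  exact (CStarAlgebra.norm_le_one_iff_of_nonneg M hM.nonneg).1 hM1

end Matrix

namespace PositiveContractionProduct

noncomputable def A : Matrix (Fin 2) (Fin 2) ℂ := (1 / 25 : ℂ) • !![9, 3; 0, 16]

noncomputable def eig : Fin 2 → ℂ := ![9 / 25, 16 / 25]

def S : Matrix (Fin 2) (Fin 2) ℂ := !![1, 3; 0, 7]

def T : Matrix (Fin 2) (Fin 2) ℂ := !![7, 0; -3, 1]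

theorem norm_A_le_one : ‖A‖ ≤ 1 := by
  have hA : A = (1 / 25 : ℂ) • (diagonal ![9, 16] + (3 : ℂ) • single 0 1 1) := by
    ext i j
    fin_cases i <;> fin_cases j <;> simp [A]
  have hdiag : ‖(![9, 16] : Fin 2 → ℂ)‖ ≤ 16 :=
    (pi_norm_le_iff_of_nonneg (by norm_num)).2 (by simp [Fin.forall_fin_two]; norm_num)
  rw [hA, norm_smul]
  grw [norm_add_le, norm_smul, l2_opNorm_diagonal, l2_opNorm_single, hdiag]
  norm_num

theorem eig_injective : Function.Injective eig := by
  intro i j h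
  fin_cases i <;> fin_cases j <;> first | rfl | norm_num [eig] at h

theorem conjTranspose_diagonal_eig : (diagonal eig)ᴴ = diagonal eig := by
  rw [diagonal_conjTranspose]
  congr 1
  ext i
  fin_cases i <;> simp [eig]

theorem isUnit_det_S : IsUnit S.det := by
  simp [S, det_fin_two]

theorem A_mul_S : A * S = S * diagonal eig := by
  ext i j
  fin_cases i <;> fin_cases j <;> simp [A, S, eig, mul_apply, Fin.sum_univ_two] <;> norm_num

theorem conjTranspose_A_mul_T : Aᴴ * T = T * diagonal eig := by
  ext i j
  fin_cases i <;> fin_cases j <;>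
    simp [A, T, eig, mul_apply, Fin.sum_univ_two, Complex.conj_ofNat] <;> norm_num

theorem conjTranspose_T_mul_S : Tᴴ * S = (7 : ℂ) • 1 := by
  ext i j
  fin_cases i <;> fin_cases j <;> simp [T, S, mul_apply, Fin.sum_univ_two, Complex.conj_ofNat]
  ring

theorem T_mul_conjTranspose_S : T * Sᴴ = (7 : ℂ) • 1 := by
  ext i j
  fin_cases i <;> fin_cases j <;> simp [T, S, mul_apply, Fin.sum_univ_two, Complex.conj_ofNat]

theorem A_eq_similar : A = S * diagonal eig * S⁻¹ := by
  rw [← A_mul_S, mul_nonsing_inv_cancel_right _ _ isUnit_det_S]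

theorem add_le_of_posSemidef_conjTranspose_T_mul_T_sub {p : Fin 2 → ℝ}
    (h : (Tᴴ * T - diagonal fun i ↦ (p i : ℂ)).PosSemidef) : p 0 + 100 * p 1 ≤ 98 := by
  have hre := (Complex.nonneg_iff.1 (h.dotProduct_mulVec_nonneg ![1, 10])).1
  simp [T, dotProduct, mulVec, Fin.sum_univ_two, mul_apply, Complex.conj_ofNat] at hre
  linarith

theorem add_le_of_posSemidef_conjTranspose_S_mul_S_sub {q : Fin 2 → ℝ}
    (h : (Sᴴ * S - diagonal fun i ↦ (q i : ℂ)).PosSemidef) : 36 * q 0 + q 1 ≤ 58 := by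
  have hre := (Complex.nonneg_iff.1 (h.dotProduct_mulVec_nonneg ![6, -1])).1
  simp [S, dotProduct, mulVec, Fin.sum_univ_two, mul_apply, Complex.conj_ofNat] at hre
  linarith

theorem weights_infeasible {p₀ p₁ q₀ q₁ : ℝ} (hp₀ : 0 ≤ p₀) (hp₁ : 0 ≤ p₁) (hq₀ : 0 ≤ q₀)
    (hq₁ : 0 ≤ q₁) (h₀ : p₀ * q₀ = 49 * (9 / 25)) (h₁ : p₁ * q₁ = 49 * (16 / 25))
    (hp : p₀ + 100 * p₁ ≤ 98) (hq : 36 * q₀ + q₁ ≤ 58) : False := by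
  nlinarith [mul_le_mul hp hq (by positivity) (by norm_num), sq_nonneg (p₀ * q₁ - 3600 * p₁ * q₀),
    mul_nonneg hp₀ hq₁, mul_nonneg hp₁ hq₀]

theorem isDiag_of_eq_mul {P Q : Matrix (Fin 2) (Fin 2) ℂ} (hP : P.IsHermitian)
    (hQ : Q.IsHermitian) (hPQ : A = P * Q) : (Tᴴ * P * T).IsDiag ∧ (Sᴴ * Q * S).IsDiag := by
  have hA_conj : Aᴴ = Q * P := by rw [hPQ, conjTranspose_mul, hP, hQ]
  have hAP : Aᴴᴴ * P = P * Aᴴ := by rw [conjTranspose_conjTranspose, hA_conj, hPQ, Matrix.mul_assoc]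
  have hAQ : Aᴴ * Q = Q * A := by rw [hA_conj, hPQ, Matrix.mul_assoc]
  exact ⟨isDiag_of_commute_diagonal eig_injective
      (commute_conjTranspose_mul_mul conjTranspose_diagonal_eig conjTranspose_A_mul_T hAP),
    isDiag_of_commute_diagonal eig_injective
      (commute_conjTranspose_mul_mul conjTranspose_diagonal_eig A_mul_S hAQ)⟩

theorem conjTranspose_mul_mul_mul_eq_of_eq_mul {P Q : Matrix (Fin 2) (Fin 2) ℂ}
    (hPQ : A = P * Q) : Tᴴ * P * T * (Sᴴ * Q * S) = (49 : ℂ) • diagonal eig :=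
  calc Tᴴ * P * T * (Sᴴ * Q * S) = Tᴴ * P * (T * Sᴴ) * Q * S := by simp only [Matrix.mul_assoc]
    _ = (7 : ℂ) • (Tᴴ * S * diagonal eig) := by
      rw [T_mul_conjTranspose_S, Matrix.mul_smul, Matrix.mul_one, Matrix.smul_mul,
        Matrix.smul_mul, Matrix.mul_assoc Tᴴ P Q, ← hPQ, Matrix.mul_assoc, A_mul_S,
        Matrix.mul_assoc]
    _ = (49 : ℂ) • diagonal eig := by
      rw [conjTranspose_T_mul_S, Matrix.smul_mul, Matrix.one_mul, smul_smul]
      norm_num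

theorem not_eq_mul_of_posSemidef {P Q : Matrix (Fin 2) (Fin 2) ℂ} (hP : P.PosSemidef)
    (hP1 : (1 - P).PosSemidef) (hQ : Q.PosSemidef) (hQ1 : (1 - Q).PosSemidef) : A ≠ P * Q := by
  intro hPQ
  obtain ⟨hP_diag, hQ_diag⟩ := isDiag_of_eq_mul hP.1 hQ.1 hPQ
  obtain ⟨p, hp, hP'⟩ := (hP.conjTranspose_mul_mul_same T).exists_diagonal_ofReal hP_diag
  obtain ⟨q, hq, hQ'⟩ := (hQ.conjTranspose_mul_mul_same S).exists_diagonal_ofReal hQ_diag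
  have hweight := conjTranspose_mul_mul_mul_eq_of_eq_mul hPQ
  rw [hP', hQ', diagonal_mul_diagonal, ← diagonal_smul] at hweight
  have h₀ : p 0 * q 0 = 49 * (9 / 25) := by
    simpa [eig] using congr_arg Complex.re (congr_fun (diagonal_injective hweight) 0)
  have h₁ : p 1 * q 1 = 49 * (16 / 25) := by
    simpa [eig] using congr_arg Complex.re (congr_fun (diagonal_injective hweight) 1)
  have hpT := add_le_of_posSemidef_conjTranspose_T_mul_T_sub (p := p) (by
    simpa only [Matrix.mul_sub, Matrix.sub_mul, Matrix.mul_one, hP'] using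
      hP1.conjTranspose_mul_mul_same T)
  have hqS := add_le_of_posSemidef_conjTranspose_S_mul_S_sub (q := q) (by
    simpa only [Matrix.mul_sub, Matrix.sub_mul, Matrix.mul_one, hQ'] using
      hQ1.conjTranspose_mul_mul_same S)
  exact weights_infeasible (hp 0) (hp 1) (hq 0) (hq 1) h₀ h₁ hpT hqS

end PositiveContractionProduct

/-- A = (1/25)·[[9,3],[0,16]] is a contraction similar to diag(9/25,16/25) but
is not the product of two positive semidefinite contractions. -/
theorem stmt3 :
    let A : Matrix (Fin 2) (Fin 2) ℂ := (1 / 25 : ℂ) • !![9, 3; 0, 16]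
    ‖A‖ ≤ 1 ∧
    (∃ S : Matrix (Fin 2) (Fin 2) ℂ, IsUnit S ∧
      A = S * Matrix.diagonal ![(9 / 25 : ℂ), (16 / 25 : ℂ)] * S⁻¹) ∧
    ¬ ∃ P Q : Matrix (Fin 2) (Fin 2) ℂ, P.PosSemidef ∧ ‖P‖ ≤ 1 ∧ Q.PosSemidef ∧ ‖Q‖ ≤ 1 ∧
      A = P * Q := by
  open PositiveContractionProduct in
  refine ⟨norm_A_le_one, ⟨S, (isUnit_iff_isUnit_det _).2 isUnit_det_S, A_eq_similar⟩, ?_⟩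
  rintro ⟨P, Q, hP, hP1, hQ, hQ1, hPQ⟩
  exact not_eq_mul_of_posSemidef hP (hP.one_sub_of_norm_le_one hP1) hQ
    (hQ.one_sub_of_norm_le_one hQ1) hPQ
end

section
/- For real numbers a, b ∈ (0,1) with a ≠ b, the maximum of (d₁−1)(d₂−1) over all pairs (d₁,d₂) with d₁ ≥ 1, d₂ ≥ 1, 1 − d₁a ≥ 0, 1 − d₂b ≥ 0, and (d₁−1)(d₂−1) = (1−d₁a)(1−d₂b) equals (1−a)(1−b)/(1+√(ab))². -/
/-! The substitution `u = d₁ - 1`, `v = d₂ - 1` turns the constraint into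
`u v (1 - a b) + a (1 - b) u + b (1 - a) v = (1 - a) (1 - b)`. By AM-GM the two linear terms are at
least `2 √(ab) √((1-a)(1-b)) √(uv)`, which gives a quadratic inequality in `√(uv)` whose
solution is `√(uv) (1 + √(ab)) ≤ √((1-a)(1-b))`. Equality holds when the two linear terms
coincide, namely at `d₁ = (a + √(ab)) / (a (1 + √(ab)))` and symmetrically for `d₂`. -/

theorem mul_one_add_le_of_sq_add_le {r s w : ℝ} (hr : 0 < r) (hs : s ≤ 1) (hw : 0 ≤ w)
    (h : w ^ 2 * (1 - s ^ 2) + 2 * s * r * w ≤ r ^ 2) : w * (1 + s) ≤ r := by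
  have hfactor : 0 ≤ (r + w * (1 - s)) * (r - w * (1 + s)) := by linear_combination h
  have hpos : 0 < r + w * (1 - s) :=
    add_pos_of_pos_of_nonneg hr (mul_nonneg hw (sub_nonneg.2 hs))
  linarith [nonneg_of_mul_nonneg_right hfactor hpos]

theorem sub_one_mul_sub_one_le {a b d₁ d₂ : ℝ} (ha₀ : 0 ≤ a) (ha₁ : a < 1) (hb₀ : 0 ≤ b)
    (hb₁ : b < 1) (hd₁ : 1 ≤ d₁) (hd₂ : 1 ≤ d₂)
    (h : (d₁ - 1) * (d₂ - 1) = (1 - d₁ * a) * (1 - d₂ * b)) :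
    (d₁ - 1) * (d₂ - 1) ≤ (1 - a) * (1 - b) / (1 + √(a * b)) ^ 2 := by
  have hA : 0 < 1 - a := sub_pos.2 ha₁
  have hB : 0 < 1 - b := sub_pos.2 hb₁
  have hu : 0 ≤ d₁ - 1 := sub_nonneg.2 hd₁
  have hv : 0 ≤ d₂ - 1 := sub_nonneg.2 hd₂
  set s := √(a * b)
  set r := √((1 - a) * (1 - b))
  set w := √((d₁ - 1) * (d₂ - 1))
  have hs₂ : s ^ 2 = a * b := Real.sq_sqrt (mul_nonneg ha₀ hb₀)
  have hr₂ : r ^ 2 = (1 - a) * (1 - b) := Real.sq_sqrt (mul_pos hA hB).le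
  have hw₂ : w ^ 2 = (d₁ - 1) * (d₂ - 1) := Real.sq_sqrt (mul_nonneg hu hv)
  have hs₁ : s ≤ 1 := Real.sqrt_le_one.2 (by nlinarith)
  have hr : 0 < r := Real.sqrt_pos.2 (mul_pos hA hB)
  have amgm : 2 * (s * r * w) ≤ a * (1 - b) * (d₁ - 1) + b * (1 - a) * (d₂ - 1) :=
    two_mul_le_add_of_sq_le_mul (mul_nonneg (mul_nonneg ha₀ hB.le) hu)
      (mul_nonneg (mul_nonneg hb₀ hA.le) hv)
      (le_of_eq (by rw [mul_pow, mul_pow, hs₂, hr₂, hw₂]; ring))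
  have hquad : w ^ 2 * (1 - s ^ 2) + 2 * s * r * w ≤ r ^ 2 := by
    rw [hw₂, hs₂, hr₂]
    linear_combination amgm + h
  rw [le_div_iff₀ (by positivity), ← hw₂, ← hr₂, ← mul_pow]
  exact pow_le_pow_left₀ (by positivity)
    (mul_one_add_le_of_sq_add_le hr hs₁ (Real.sqrt_nonneg _) hquad) 2

theorem div_mul_one_add_sub_one {a s : ℝ} (ha : a ≠ 0) (hs : 1 + s ≠ 0) :
    (a + s) / (a * (1 + s)) - 1 = (1 - a) * s / (a * (1 + s)) := by
  field_simp
  ring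

theorem one_sub_div_mul_one_add_mul {a s : ℝ} (ha : a ≠ 0) (hs : 1 + s ≠ 0) :
    1 - (a + s) / (a * (1 + s)) * a = (1 - a) / (1 + s) := by
  field_simp
  ring

theorem exists_sub_one_mul_sub_one_eq {a b : ℝ} (ha₀ : 0 < a) (ha₁ : a < 1) (hb₀ : 0 < b)
    (hb₁ : b < 1) : ∃ d₁ d₂ : ℝ, 1 ≤ d₁ ∧ 1 ≤ d₂ ∧ 0 ≤ 1 - d₁ * a ∧ 0 ≤ 1 - d₂ * b ∧
      (d₁ - 1) * (d₂ - 1) = (1 - d₁ * a) * (1 - d₂ * b) ∧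
      (1 - a) * (1 - b) / (1 + √(a * b)) ^ 2 = (d₁ - 1) * (d₂ - 1) := by
  set s := √(a * b)
  have hs₂ : s ^ 2 = a * b := Real.sq_sqrt (by positivity)
  have hs : 1 + s ≠ 0 := by positivity
  have hA : 0 ≤ 1 - a := sub_nonneg.2 ha₁.le
  have hB : 0 ≤ 1 - b := sub_nonneg.2 hb₁.le
  refine ⟨(a + s) / (a * (1 + s)), (b + s) / (b * (1 + s)), ?_, ?_, ?_, ?_, ?_, ?_⟩ <;>
    simp only [← sub_nonneg (b := (1 : ℝ)), div_mul_one_add_sub_one ha₀.ne' hs,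
      div_mul_one_add_sub_one hb₀.ne' hs, one_sub_div_mul_one_add_mul ha₀.ne' hs,
      one_sub_div_mul_one_add_mul hb₀.ne' hs]
  · positivity
  · positivity
  · positivity
  · positivity
  · field_simp
    linear_combination (1 - a) * (1 - b) * hs₂
  · field_simp
    linear_combination -(1 - a) * (1 - b) * hs₂

theorem stmt5_general (a b : ℝ) (ha : a ∈ Set.Ioo (0 : ℝ) 1) (hb : b ∈ Set.Ioo (0 : ℝ) 1) :
    IsGreatest {x : ℝ | ∃ d₁ d₂ : ℝ, 1 ≤ d₁ ∧ 1 ≤ d₂ ∧ 0 ≤ 1 - d₁ * a ∧ 0 ≤ 1 - d₂ * b ∧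
        (d₁ - 1) * (d₂ - 1) = (1 - d₁ * a) * (1 - d₂ * b) ∧ x = (d₁ - 1) * (d₂ - 1)}
      ((1 - a) * (1 - b) / (1 + Real.sqrt (a * b)) ^ 2) := by
  refine ⟨exists_sub_one_mul_sub_one_eq ha.1 ha.2 hb.1 hb.2, ?_⟩
  rintro x ⟨d₁, d₂, hd₁, hd₂, -, -, h, rfl⟩
  exact sub_one_mul_sub_one_le ha.1.le ha.2 hb.1.le hb.2 hd₁ hd₂ h

/-- For a, b ∈ (0,1), a ≠ b, the maximum of (d₁−1)(d₂−1) over d₁,d₂ ≥ 1 with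
1−d₁a ≥ 0, 1−d₂b ≥ 0 and (d₁−1)(d₂−1) = (1−d₁a)(1−d₂b) equals (1−a)(1−b)/(1+√(ab))². -/
theorem stmt5 (a b : ℝ) (ha : a ∈ Set.Ioo (0 : ℝ) 1) (hb : b ∈ Set.Ioo (0 : ℝ) 1)
    (hab : a ≠ b) :
    IsGreatest {x : ℝ | ∃ d₁ d₂ : ℝ, 1 ≤ d₁ ∧ 1 ≤ d₂ ∧ 0 ≤ 1 - d₁ * a ∧ 0 ≤ 1 - d₂ * b ∧
        (d₁ - 1) * (d₂ - 1) = (1 - d₁ * a) * (1 - d₂ * b) ∧ x = (d₁ - 1) * (d₂ - 1)}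
      ((1 - a) * (1 - b) / (1 + Real.sqrt (a * b)) ^ 2) :=
  stmt5_general a b ha hb
end

section
/- Suppose A ∈ M_n is similar to I_p ⊕ 0_q ⊕ diag(a₁,…,a_m) with each a_j ∈ (0,1), A is unitarily similar to I_p ⊕ A₁, and there exists an (n−p)×m matrix S of rank m with A₁A₁*S = A₁S = S·diag(a₁,…,a_m). Then A is the product of two orthogonal projections. -/
/-!
Comparing ranks in the two similarity forms gives `rank A₁ = m = rank S`, and `A₁ S = S D` with
`D` invertible then forces `A₁` and `S` to have the same column space. Let `P` and `Q` be the
orthogonal projections onto the column spaces of `S` and `R = A₁ᴴ S`. The two intertwining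
relations give `Sᴴ R = D (Sᴴ S)` and `Rᴴ R = (Sᴴ S) D`; the latter is Hermitian, so `D` commutes
with `Sᴴ S` and `Sᴴ R = Rᴴ R`. This collapses `P Q` to `P A₁ = A₁`, and `A` is the product of
`I_p ⊕ P` and `I_p ⊕ Q` conjugated by the unitary.
-/

open Matrix

theorem Submodule.finrank_prod {K V W : Type*} [Field K] [AddCommGroup V] [Module K V]
    [AddCommGroup W] [Module K W] (p : Submodule K V) (q : Submodule K W)
    [FiniteDimensional K p] [FiniteDimensional K q] :
    Module.finrank K (p.prod q) = Module.finrank K p + Module.finrank K q := by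
  have h : (p.subtype.prodMap q.subtype).range = p.prod q := by simp
  rw [← h, LinearMap.finrank_range_of_inj, Module.finrank_prod]
  exact Prod.map_injective.mpr ⟨p.injective_subtype, q.injective_subtype⟩

namespace Matrix

section Rank

variable {K : Type*} [Field K]

theorem rank_fromBlocks_zero_zero {m n : Type*} [Fintype m] [Fintype n] [DecidableEq m]
    [DecidableEq n] (A : Matrix m m K) (B : Matrix n n K) :
    (fromBlocks A 0 0 B).rank = A.rank + B.rank := by
  let b := (Pi.basisFun K m).prod (Pi.basisFun K n)
  have h : fromBlocks A 0 0 B = LinearMap.toMatrix b b ((toLin' A).prodMap (toLin' B)) := by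
    rw [LinearMap.toMatrix_prodMap, LinearMap.toMatrix_eq_toMatrix',
      LinearMap.toMatrix_eq_toMatrix', LinearMap.toMatrix'_toLin', LinearMap.toMatrix'_toLin']
  rw [h, rank_eq_finrank_range_toLin _ b b, toLin_toMatrix, LinearMap.range_prodMap,
    Submodule.finrank_prod]
  rfl

theorem rank_mul_reindex_fromBlocks_one_mul {l o n : Type*} [Fintype l] [Fintype o] [Fintype n]
    [DecidableEq l] [DecidableEq o] [DecidableEq n] {T V : Matrix n n K} (e : l ⊕ o ≃ n)
    (M : Matrix o o K) (hT : IsUnit T.det) (hV : IsUnit V.det) :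
    (T * reindex e e (fromBlocks 1 0 0 M) * V).rank = Fintype.card l + M.rank := by
  rw [rank_mul_eq_left_of_isUnit_det V _ hV, rank_mul_eq_right_of_isUnit_det T _ hT, rank_reindex,
    rank_fromBlocks_zero_zero, rank_one]

theorem isUnit_of_rank_eq_card {n : Type*} [Fintype n] [DecidableEq n] {M : Matrix n n K}
    (h : M.rank = Fintype.card n) : IsUnit M := by
  have htop : LinearMap.range M.mulVecLin = ⊤ :=
    Submodule.eq_top_of_finrank_eq (by simpa [Matrix.rank] using h)
  exact mulVec_surjective_iff_isUnit.mp (LinearMap.range_eq_top.mp htop)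

theorem range_mulVecLin_le_of_mul_eq_mul {k m : Type*} [Fintype k] [Fintype m] [DecidableEq m]
    {A : Matrix k k K} {S : Matrix k m K} {D : Matrix m m K}
    (hD : IsUnit D.det) (h : A * S = S * D) (hrank : A.rank ≤ S.rank) :
    LinearMap.range A.mulVecLin ≤ LinearMap.range S.mulVecLin := by
  have hSA : LinearMap.range S.mulVecLin ≤ LinearMap.range A.mulVecLin := by
    rw [← mul_nonsing_inv_cancel_right D S hD, ← h, Matrix.mul_assoc, mulVecLin_mul]
    exact LinearMap.range_comp_le_range _ _
  exact (Submodule.eq_of_le_of_finrank_le hSA hrank).ge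

end Rank

section ColProj

variable {R : Type*} [CommRing R] [StarRing R] {k m : Type*} [Fintype k] [Fintype m]

theorem conjTranspose_mul_self_conjTranspose_mul {A : Matrix k k R} {S : Matrix k m R}
    {D : Matrix m m R} (h1 : A * Aᴴ * S = S * D) :
    (Aᴴ * S)ᴴ * (Aᴴ * S) = Sᴴ * S * D := by
  simp only [conjTranspose_mul, conjTranspose_conjTranspose, Matrix.mul_assoc] at h1 ⊢
  rw [h1]

theorem conjTranspose_mul_conjTranspose_mul_eq_of_mul_eq {A : Matrix k k R} {S : Matrix k m R}
    {D : Matrix m m R} (hD : D.IsHermitian) (h1 : A * Aᴴ * S = S * D) (h2 : A * S = S * D) :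
    Sᴴ * (Aᴴ * S) = (Aᴴ * S)ᴴ * (Aᴴ * S) := by
  have hgram := conjTranspose_mul_self_conjTranspose_mul h1
  have hherm : (Sᴴ * S * D)ᴴ = Sᴴ * S * D := by
    rw [← hgram]; exact isHermitian_conjTranspose_mul_self _
  calc Sᴴ * (Aᴴ * S) = (A * S)ᴴ * S := by rw [conjTranspose_mul, Matrix.mul_assoc]
    _ = (Sᴴ * S * D)ᴴ := by
        simp only [h2, conjTranspose_mul, conjTranspose_conjTranspose, hD.eq, Matrix.mul_assoc]
    _ = _ := by rw [hherm, hgram]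

variable [DecidableEq m]

/-- Orthogonal projection onto the column space of `S`; it is `0` when `Sᴴ * S` is singular,
since then `⁻¹` returns `0`. -/
noncomputable def colProj (S : Matrix k m R) : Matrix k k R := S * (Sᴴ * S)⁻¹ * Sᴴ

theorem colProj_mul_self {S : Matrix k m R} (hS : IsUnit (Sᴴ * S).det) : colProj S * S = S := by
  rw [colProj, Matrix.mul_assoc, Matrix.mul_assoc, nonsing_inv_mul _ hS, Matrix.mul_one]

theorem isStarProjection_colProj {S : Matrix k m R} (hS : IsUnit (Sᴴ * S).det) :
    IsStarProjection (colProj S) where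
  isIdempotentElem :=
    calc colProj S * colProj S = colProj S * S * ((Sᴴ * S)⁻¹ * Sᴴ) := by
          simp only [colProj, Matrix.mul_assoc]
      _ = colProj S := by rw [colProj_mul_self hS, colProj, Matrix.mul_assoc]
  isSelfAdjoint := by
    have hG : ((Sᴴ * S)⁻¹)ᴴ = (Sᴴ * S)⁻¹ := (isHermitian_conjTranspose_mul_self S).inv
    simp only [IsSelfAdjoint, colProj, star_eq_conjTranspose, conjTranspose_mul,
      conjTranspose_conjTranspose, hG, Matrix.mul_assoc]

theorem colProj_mul_of_range_le {S : Matrix k m R} (hS : IsUnit (Sᴴ * S).det) {l : Type*}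
    [Fintype l] [DecidableEq l] {B : Matrix k l R}
    (h : LinearMap.range B.mulVecLin ≤ LinearMap.range S.mulVecLin) :
    colProj S * B = B := by
  refine Matrix.toLin'.injective (LinearMap.ext fun v => ?_)
  obtain ⟨w, hw⟩ := h ⟨v, rfl⟩
  simp only [Matrix.toLin'_apply, mulVecLin_apply] at hw ⊢
  rw [← Matrix.mulVec_mulVec, ← hw, Matrix.mulVec_mulVec, colProj_mul_self hS]

theorem colProj_mul_colProj_conjTranspose_mul {A : Matrix k k R} {S : Matrix k m R}
    (hR : IsUnit ((Aᴴ * S)ᴴ * (Aᴴ * S)).det) (hSR : Sᴴ * (Aᴴ * S) = (Aᴴ * S)ᴴ * (Aᴴ * S)) :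
    colProj S * colProj (Aᴴ * S) = colProj S * A := by
  calc colProj S * colProj (Aᴴ * S)
      = S * (Sᴴ * S)⁻¹ * (Sᴴ * (Aᴴ * S)) * ((Aᴴ * S)ᴴ * (Aᴴ * S))⁻¹ * (Aᴴ * S)ᴴ := by
        simp only [colProj, Matrix.mul_assoc]
    _ = S * (Sᴴ * S)⁻¹ * (Aᴴ * S)ᴴ := by rw [hSR, mul_nonsing_inv_cancel_right _ _ hR]
    _ = colProj S * A := by
        simp only [colProj, conjTranspose_mul, conjTranspose_conjTranspose, Matrix.mul_assoc]

theorem exists_isStarProjection_mul_eq_of_mul_eq [DecidableEq k] {A : Matrix k k R} {S : Matrix k m R}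
    {D : Matrix m m R} (hS : IsUnit (Sᴴ * S).det) (hD : IsUnit D.det) (hDH : D.IsHermitian)
    (h1 : A * Aᴴ * S = S * D) (h2 : A * S = S * D)
    (hrange : LinearMap.range A.mulVecLin ≤ LinearMap.range S.mulVecLin) :
    ∃ P Q : Matrix k k R, IsStarProjection P ∧ IsStarProjection Q ∧ P * Q = A := by
  have hR : IsUnit ((Aᴴ * S)ᴴ * (Aᴴ * S)).det := by
    rw [conjTranspose_mul_self_conjTranspose_mul h1, det_mul]
    exact hS.mul hD
  refine ⟨colProj S, colProj (Aᴴ * S), isStarProjection_colProj hS,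
    isStarProjection_colProj hR, ?_⟩
  rw [colProj_mul_colProj_conjTranspose_mul hR
    (conjTranspose_mul_conjTranspose_mul_eq_of_mul_eq hDH h1 h2), colProj_mul_of_range_le hS hrange]

end ColProj

end Matrix

theorem IsStarProjection.fromBlocks_zero_zero {R k l : Type*} [Ring R] [StarRing R] [Fintype k]
    [Fintype l] {P : Matrix k k R} {Q : Matrix l l R} (hP : IsStarProjection P)
    (hQ : IsStarProjection Q) : IsStarProjection (fromBlocks P 0 0 Q) where
  isIdempotentElem := by
    simp [IsIdempotentElem, fromBlocks_multiply, hP.isIdempotentElem.eq, hQ.isIdempotentElem.eq]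
  isSelfAdjoint := by
    have hP' : Pᴴ = P := hP.isSelfAdjoint
    have hQ' : Qᴴ = Q := hQ.isSelfAdjoint
    simp [IsSelfAdjoint, star_eq_conjTranspose, fromBlocks_conjTranspose, hP', hQ']

theorem IsStarProjection.reindex {R k l : Type*} [Semiring R] [StarRing R] [Fintype k]
    [Fintype l] {P : Matrix k k R} (hP : IsStarProjection P) (e : k ≃ l) :
    IsStarProjection (reindex e e P) where
  isIdempotentElem := by
    simp [IsIdempotentElem, reindex_apply, submatrix_mul_equiv, hP.isIdempotentElem.eq]
  isSelfAdjoint := by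
    have hP' : Pᴴ = P := hP.isSelfAdjoint
    rw [IsSelfAdjoint, star_eq_conjTranspose, conjTranspose_reindex, hP']

theorem exists_isStarProjection_mul_eq_conj_reindex_fromBlocks_one {R l o n : Type*}
    [CommRing R] [StarRing R] [Fintype l] [Fintype o] [Fintype n] [DecidableEq l] [DecidableEq o]
    [DecidableEq n] {U : Matrix n n R} (hU : U ∈ unitaryGroup n R) (f : l ⊕ o ≃ n)
    {P Q : Matrix o o R} (hP : IsStarProjection P) (hQ : IsStarProjection Q) :
    ∃ P' Q' : Matrix n n R, IsStarProjection P' ∧ IsStarProjection Q' ∧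
      P' * Q' = U * reindex f f (fromBlocks 1 0 0 (P * Q)) * star U := by
  have hlift : ∀ {X}, IsStarProjection X →
      IsStarProjection (U * reindex f f (fromBlocks (1 : Matrix l l R) 0 0 X) * star U) :=
    fun hX => (((IsStarProjection.one _).fromBlocks_zero_zero hX).reindex f).map
      (Unitary.conjStarAlgAut R _ ⟨U, hU⟩)
  refine ⟨_, _, hlift hP, hlift hQ, ?_⟩
  have hblocks : fromBlocks (1 : Matrix l l R) 0 0 (P * Q) =
      fromBlocks 1 0 0 P * fromBlocks 1 0 0 Q := by simp [fromBlocks_multiply]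
  have hUU : star U * U = 1 := mem_unitaryGroup_iff'.mp hU
  rw [hblocks, ← coe_reindexAlgEquiv R R, map_mul]
  simp only [coe_reindexAlgEquiv, Matrix.mul_assoc, ← Matrix.mul_assoc (star U), hUU,
    Matrix.one_mul]

open scoped ComplexOrder

/-- If A is similar to I_p ⊕ 0_q ⊕ diag(a₁,…,a_m) with a_j ∈ (0,1), A is
unitarily similar to I_p ⊕ A₁, and there is an (n−p)×m matrix S of rank m with
A₁A₁*S = A₁S = S·diag(a₁,…,a_m), then A is the product of two orthogonal projections. -/
theorem stmt9 (n p q m : ℕ) (A : Matrix (Fin n) (Fin n) ℂ) (a : Fin m → ℝ)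
    (ha : ∀ j, a j ∈ Set.Ioo (0 : ℝ) 1)
    (hsim : ∃ (T : Matrix (Fin n) (Fin n) ℂ) (e : (Fin p ⊕ (Fin q ⊕ Fin m)) ≃ Fin n),
      IsUnit T ∧ A = T * (Matrix.reindex e e
        (Matrix.fromBlocks 1 0 0
          (Matrix.fromBlocks 0 0 0 (Matrix.diagonal fun j => (a j : ℂ))))) * T⁻¹)
    (A₁ : Matrix (Fin (n - p)) (Fin (n - p)) ℂ)
    (husim : ∃ (f : (Fin p ⊕ Fin (n - p)) ≃ Fin n) (U : Matrix (Fin n) (Fin n) ℂ),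
      U ∈ Matrix.unitaryGroup (Fin n) ℂ ∧
      A = U * (Matrix.reindex f f (Matrix.fromBlocks 1 0 0 A₁)) * star U)
    (S : Matrix (Fin (n - p)) (Fin m) ℂ) (hrank : S.rank = m)
    (h1 : A₁ * A₁ᴴ * S = S * Matrix.diagonal (fun j => (a j : ℂ)))
    (h2 : A₁ * S = S * Matrix.diagonal (fun j => (a j : ℂ))) :
    ∃ P Q : Matrix (Fin n) (Fin n) ℂ, P.IsHermitian ∧ P * P = P ∧
      Q.IsHermitian ∧ Q * Q = Q ∧ A = P * Q := by
  obtain ⟨T, e, hT, hA⟩ := hsim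
  obtain ⟨f, U, hU, hAU⟩ := husim
  have hD : IsUnit (diagonal fun j => (a j : ℂ)).det := by
    rw [det_diagonal]
    exact IsUnit.mk0 _ (Finset.prod_ne_zero_iff.mpr fun j _ => by simpa using (ha j).1.ne')
  have hrankA₁ : A₁.rank = m := by
    have hT' := (isUnit_iff_isUnit_det T).mp hT
    have h := congrArg rank (hA.symm.trans hAU)
    rw [rank_mul_reindex_fromBlocks_one_mul _ _ hT' (isUnit_nonsing_inv_det T hT'),
      rank_mul_reindex_fromBlocks_one_mul _ _ (isUnit_det_of_right_inverse hU.2)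
        (isUnit_det_of_left_inverse hU.2), rank_fromBlocks_zero_zero, rank_zero,
      rank_of_isUnit _ ((isUnit_iff_isUnit_det _).mpr hD)] at h
    simpa using h.symm
  have hS : IsUnit (Sᴴ * S).det := (isUnit_iff_isUnit_det _).mp
    (isUnit_of_rank_eq_card (by rw [rank_conjTranspose_mul_self, hrank, Fintype.card_fin]))
  obtain ⟨P₁, Q₁, hP₁, hQ₁, rfl⟩ := exists_isStarProjection_mul_eq_of_mul_eq hS hD
    (isHermitian_diagonal_of_self_adjoint _ (by ext; simp)) h1 h2
    (range_mulVecLin_le_of_mul_eq_mul hD h2 (by rw [hrankA₁, hrank]))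
  obtain ⟨P, Q, hP, hQ, hPQ⟩ :=
    exists_isStarProjection_mul_eq_conj_reindex_fromBlocks_one hU f hP₁ hQ₁
  exact ⟨P, Q, hP.isSelfAdjoint, hP.isIdempotentElem, hQ.isSelfAdjoint, hQ.isIdempotentElem,
    hAU.trans hPQ.symm⟩
end

section
/- If A ∈ M_n is the product of two orthogonal projections and is similar to I_p ⊕ 0_q ⊕ diag(a₁,…,a_m) with each a_j ∈ (0,1), then A is unitarily similar to I_p ⊕ A₁ for some A₁ ∈ M_{n−p}, and there exists an (n−p)×m matrix S of rank m such that A₁A₁*S = A₁S = S·diag(a₁,…,a_m). -/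
/-!
A vector `y` fixed by a product `PQ` of orthogonal projections is fixed by `P` and by `Q`
(for `Q` because `‖Qy‖² = ⟪y, Qy⟫ = ⟪Py, Qy⟫ = ⟪y, PQy⟫ = ‖y‖²`), hence also by `(PQ)* = QP`.
So the span of the `p` columns of `T` belonging to the eigenvalue `1` reduces `A = PQ`, and an
orthonormal basis adapted to it and its orthogonal complement brings `A` to the form `I_p ⊕ A₁`.

An eigenvector `x` of `PQ` for a nonzero eigenvalue `a` satisfies `Px = x`, so
`AA* x = PQPx = Ax = ax`. In the new basis the eigenvectors for the `aⱼ ≠ 1` have no component in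
the first block, and their second blocks are the columns of `S`; the change of basis is unitary,
so it preserves their rank `m`.
-/

open scoped ComplexOrder Matrix

namespace Matrix

variable {ι κ μ ν 𝕜 : Type*} [RCLike 𝕜]

theorem conjTranspose_mul_mul_eq_self_of_isStarProjection [Fintype ι]
    {P Q : Matrix ι ι 𝕜} (hP : IsStarProjection P) (hQ : IsStarProjection Q)
    {Y : Matrix ι κ 𝕜} (h : P * Q * Y = Y) : (P * Q)ᴴ * Y = Y := by
  have hPh : Pᴴ = P := hP.isSelfAdjoint
  have hQh : Qᴴ = Q := hQ.isSelfAdjoint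
  have hPY : P * Y = Y := by
    rw [← h]; simp only [← Matrix.mul_assoc, hP.isIdempotentElem.eq]
  have hYQY : Yᴴ * Q * Y = Yᴴ * Y := by
    calc Yᴴ * Q * Y = (P * Y)ᴴ * Q * Y := by rw [hPY]
      _ = Yᴴ * (P * Q * Y) := by rw [conjTranspose_mul, hPh]; simp only [Matrix.mul_assoc]
      _ = Yᴴ * Y := by rw [h]
  have hQY : Q * Y = Y := by
    have hZ : (Y - Q * Y)ᴴ * (Y - Q * Y) = 0 := by
      have hYQQ : Yᴴ * Q * Q = Yᴴ * Q := by rw [Matrix.mul_assoc, hQ.isIdempotentElem.eq]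
      simp only [conjTranspose_sub, conjTranspose_mul, hQh, Matrix.sub_mul, Matrix.mul_sub,
        ← Matrix.mul_assoc, hYQQ, hYQY, sub_self, Matrix.zero_mul]
    rw [← sub_eq_zero.mp (conjTranspose_mul_self_eq_zero.mp hZ)]
  rw [conjTranspose_mul, hPh, hQh, Matrix.mul_assoc, hPY, hQY]

theorem mul_conjTranspose_mul_eq_mul_diagonal_of_isStarProjection [Fintype ι] [Fintype κ]
    [DecidableEq κ] {P Q : Matrix ι ι 𝕜} (hP : IsStarProjection P) (hQ : IsStarProjection Q)
    {W : Matrix ι κ 𝕜} {d : κ → 𝕜} (hd : ∀ j, d j ≠ 0) (hW : P * Q * W = W * diagonal d) :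
    P * Q * (P * Q)ᴴ * W = W * diagonal d := by
  have hPW : P * W = W := by
    have h : P * W * diagonal d = W * diagonal d := by
      rw [Matrix.mul_assoc, ← hW, ← Matrix.mul_assoc, ← Matrix.mul_assoc, hP.isIdempotentElem.eq]
    have hdd : diagonal d * diagonal d⁻¹ = 1 := by
      rw [diagonal_mul_diagonal, ← diagonal_one]
      exact congrArg diagonal (funext fun j => mul_inv_cancel₀ (hd j))
    calc P * W = P * W * diagonal d * diagonal d⁻¹ := by
          rw [Matrix.mul_assoc _ (diagonal d), hdd, Matrix.mul_one]
      _ = W := by rw [h, Matrix.mul_assoc, hdd, Matrix.mul_one]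
  have hPh : Pᴴ = P := hP.isSelfAdjoint
  have hQh : Qᴴ = Q := hQ.isSelfAdjoint
  calc P * Q * (P * Q)ᴴ * W = P * (Q * Q) * (P * W) := by
        rw [conjTranspose_mul, hPh, hQh]; simp only [Matrix.mul_assoc]
    _ = W * diagonal d := by rw [hQ.isIdempotentElem.eq, hPW, hW]

theorem rank_submatrix_id_of_isUnit [Fintype ι] [DecidableEq ι] [Fintype κ] {T : Matrix ι ι 𝕜}
    (hT : IsUnit T) {f : κ → ι} (hf : Function.Injective f) :
    (T.submatrix id f).rank = Fintype.card κ := by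
  have hcols : LinearIndependent 𝕜 (T.submatrix id f).col :=
    (linearIndependent_cols_iff_isUnit.mpr hT).comp f hf
  rw [rank_eq_finrank_span_cols, finrank_span_eq_card hcols]

theorem rank_mul_of_conjTranspose_mul_self_eq_one [Fintype ι] [Fintype κ] [Fintype ν]
    [DecidableEq κ] {V : Matrix ι κ 𝕜} (hV : Vᴴ * V = 1) (W : Matrix κ ν 𝕜) :
    (V * W).rank = W.rank := by
  rw [← rank_conjTranspose_mul_self, conjTranspose_mul, Matrix.mul_assoc, ← Matrix.mul_assoc Vᴴ,
    hV, Matrix.one_mul, rank_conjTranspose_mul_self]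

theorem rank_fromRows_zero [Fintype κ] [Fintype μ] [Fintype ν] (Y : Matrix μ ν 𝕜) :
    (fromRows (0 : Matrix κ ν 𝕜) Y).rank = Y.rank := by
  rw [← rank_conjTranspose_mul_self, conjTranspose_fromRows_eq_fromCols_conjTranspose,
    fromCols_mul_fromRows, conjTranspose_zero, Matrix.zero_mul, zero_add,
    rank_conjTranspose_mul_self]

theorem mul_submatrix_eq_submatrix_mul_of_eq_mul_reindex_mul_inv [Fintype ι] [DecidableEq ι]
    [Fintype κ] {A T : Matrix ι ι 𝕜} (hT : IsUnit T) (e : κ ≃ ι) {D : Matrix κ κ 𝕜}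
    (hA : A = T * reindex e e D * T⁻¹) : A * T.submatrix id e = T.submatrix id e * D := by
  have hAT : A * T = T * reindex e e D := by
    rw [hA, Matrix.mul_assoc _ T⁻¹, nonsing_inv_mul _ ((isUnit_iff_isUnit_det T).mp hT),
      Matrix.mul_one]
  calc A * T.submatrix id e = (A * T).submatrix id e := by
        rw [submatrix_mul A T id id e Function.bijective_id, submatrix_id_id]
    _ = T.submatrix id e * D := by
        rw [hAT, reindex_apply, submatrix_mul _ _ id e e e.bijective, submatrix_submatrix,
          Equiv.symm_comp_self, submatrix_id_id]

theorem mul_eq_of_mul_fromCols_eq_mul_fromBlocks [Fintype ι] [Fintype κ] [Fintype μ] [Fintype ν]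
    [DecidableEq κ] [DecidableEq ν] {A : Matrix ι ι 𝕜} {Y₁ : Matrix ι κ 𝕜} {Y₂ : Matrix ι μ 𝕜}
    {Y₃ : Matrix ι ν 𝕜} {d : ν → 𝕜}
    (h : A * fromCols Y₁ (fromCols Y₂ Y₃) =
      fromCols Y₁ (fromCols Y₂ Y₃) *
        (fromBlocks 1 0 0 (fromBlocks 0 0 0 (diagonal d)) : Matrix (κ ⊕ μ ⊕ ν) (κ ⊕ μ ⊕ ν) 𝕜)) :
    A * Y₁ = Y₁ ∧ A * Y₃ = Y₃ * diagonal d := by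
  rw [mul_fromCols, mul_fromCols, fromCols_mul_fromBlocks, fromCols_mul_fromBlocks] at h
  simp only [Matrix.mul_one, Matrix.mul_zero, add_zero, zero_add] at h
  obtain ⟨h₁, h₂⟩ := fromCols_inj h
  exact ⟨h₁, (fromCols_inj h₂).2⟩

theorem exists_unitary_fromCols_of_rank_eq {n p : ℕ} {X : Matrix (Fin n) (Fin p) 𝕜}
    (hX : X.rank = p) :
    ∃ (V₁ : Matrix (Fin n) (Fin p) 𝕜) (V₂ : Matrix (Fin n) (Fin (n - p)) 𝕜)
      (C : Matrix (Fin p) (Fin p) 𝕜), (fromCols V₁ V₂)ᴴ * fromCols V₁ V₂ = 1 ∧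
      fromCols V₁ V₂ * (fromCols V₁ V₂)ᴴ = 1 ∧ V₁ = X * C := by
  set K := LinearMap.range (toEuclideanLin X)
  have hK : Module.finrank 𝕜 K = p := by
    rw [← hX, rank_eq_finrank_range_toLin X (EuclideanSpace.basisFun (Fin n) 𝕜).toBasis
      (EuclideanSpace.basisFun (Fin p) 𝕜).toBasis]
    rfl
  have hpn : p ≤ n := hK ▸ (Submodule.finrank_le K).trans_eq finrank_euclideanSpace_fin
  let bK := (stdOrthonormalBasis 𝕜 K).reindex (finCongr hK)
  let v : Fin p ⊕ Fin (n - p) → EuclideanSpace 𝕜 (Fin n) := Sum.elim (fun i => bK i) 0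
  have hv : Orthonormal 𝕜 ((Set.range Sum.inl).domRestrict v) := by
    have h : (Set.range Sum.inl).domRestrict v =
        (fun i => (bK i : EuclideanSpace 𝕜 (Fin n))) ∘ Equiv.Set.rangeInl _ _ := by
      ext ⟨_, i, rfl⟩ : 1; rfl
    rw [h]
    exact (bK.orthonormal.comp_linearIsometry K.subtypeₗᵢ).comp _ (Equiv.injective _)
  obtain ⟨b, hb⟩ := hv.exists_orthonormalBasis_extension_of_card_eq (by
    rw [finrank_euclideanSpace_fin, Fintype.card_sum, Fintype.card_fin, Fintype.card_fin]; omega)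
  set V := (EuclideanSpace.basisFun (Fin n) 𝕜).toBasis.toMatrix b
  choose y hy using fun i => (bK i).2
  refine ⟨V.toCols₁, V.toCols₂, of fun k i => y i k, ?_, ?_, ?_⟩
  · rw [fromCols_toCols]
    exact (EuclideanSpace.basisFun (Fin n) 𝕜).toMatrix_orthonormalBasis_conjTranspose_mul_self b
  · rw [fromCols_toCols]
    exact (EuclideanSpace.basisFun (Fin n) 𝕜).toMatrix_orthonormalBasis_self_mul_conjTranspose b
  · ext j i
    have hyj := congrArg (fun w => w j) (hy i)
    simp [V, v, Module.Basis.toMatrix_apply, hb (Sum.inl i) ⟨i, rfl⟩, ← hyj, mul_apply, mulVec,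
      dotProduct]

theorem eq_fromCols_mul_fromBlocks_one_mul_conjTranspose [Fintype ι] [Fintype κ] [Fintype μ]
    [DecidableEq ι] [DecidableEq κ] [DecidableEq μ] {A : Matrix ι ι 𝕜} {V₁ : Matrix ι κ 𝕜}
    {V₂ : Matrix ι μ 𝕜} (hV : (fromCols V₁ V₂)ᴴ * fromCols V₁ V₂ = 1)
    (hV' : fromCols V₁ V₂ * (fromCols V₁ V₂)ᴴ = 1) (hA : A * V₁ = V₁) (hA' : Aᴴ * V₁ = V₁) :
    A = fromCols V₁ V₂ * (fromBlocks 1 0 0 (V₂ᴴ * A * V₂) : Matrix (κ ⊕ μ) (κ ⊕ μ) 𝕜) *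
      (fromCols V₁ V₂)ᴴ := by
  rw [conjTranspose_fromCols_eq_fromRows_conjTranspose, fromRows_mul_fromCols,
    ← fromBlocks_one] at hV
  obtain ⟨h₁₁, h₁₂, h₂₁, -⟩ := fromBlocks_inj.mp hV
  have hA₁ : V₁ᴴ * A = V₁ᴴ := by
    simpa only [conjTranspose_mul, conjTranspose_conjTranspose] using congrArg conjTranspose hA'
  have hblocks :
      (fromCols V₁ V₂)ᴴ * A * fromCols V₁ V₂ = fromBlocks 1 0 0 (V₂ᴴ * A * V₂) := by
    rw [conjTranspose_fromCols_eq_fromRows_conjTranspose, fromRows_mul, fromRows_mul_fromCols,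
      hA₁, Matrix.mul_assoc V₂ᴴ A V₁, hA, h₁₁, h₁₂, h₂₁]
  rw [← hblocks]
  calc A = fromCols V₁ V₂ * (fromCols V₁ V₂)ᴴ * A * (fromCols V₁ V₂ * (fromCols V₁ V₂)ᴴ) := by
        rw [hV', Matrix.one_mul, Matrix.mul_one]
    _ = _ := by simp only [Matrix.mul_assoc]

theorem toRows₁_eq_zero_of_fromBlocks_one_mul_eq_mul_diagonal [Fintype κ] [Fintype μ]
    [Fintype ν] [DecidableEq κ] [DecidableEq ν] {A₁ : Matrix μ μ 𝕜} {Y : Matrix (κ ⊕ μ) ν 𝕜}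
    {d : ν → 𝕜} (hd : ∀ j, d j ≠ 1)
    (h : (fromBlocks 1 0 0 A₁ : Matrix (κ ⊕ μ) (κ ⊕ μ) 𝕜) * Y = Y * diagonal d) :
    Y.toRows₁ = 0 ∧ A₁ * Y.toRows₂ = Y.toRows₂ * diagonal d := by
  rw [← fromRows_toRows Y, fromBlocks_mul_fromRows, fromRows_mul] at h
  simp only [Matrix.one_mul, Matrix.zero_mul, add_zero, zero_add] at h
  obtain ⟨h₁, h₂⟩ := fromRows_inj h
  refine ⟨?_, h₂⟩
  ext i j
  have hij := congrFun (congrFun h₁ i) j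
  rw [mul_diagonal] at hij
  exact (mul_right_eq_self₀.mp hij.symm).resolve_left (hd j)

theorem mul_conjTranspose_mul_eq_of_eq_mul_mul_conjTranspose [Fintype ι] [Fintype κ] [Fintype ν]
    [DecidableEq κ] {A : Matrix ι ι 𝕜} {V : Matrix ι κ 𝕜} {B : Matrix κ κ 𝕜} (hV : Vᴴ * V = 1)
    (hA : A = V * B * Vᴴ) {W : Matrix ι ν 𝕜} {D : Matrix ν ν 𝕜} (hW : A * W = W * D) :
    B * (Vᴴ * W) = Vᴴ * W * D := by
  calc B * (Vᴴ * W) = Vᴴ * (V * B * Vᴴ) * W := by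
        simp only [← Matrix.mul_assoc, hV, Matrix.one_mul]
    _ = Vᴴ * W * D := by rw [← hA, Matrix.mul_assoc, hW, Matrix.mul_assoc]

theorem exists_rank_eq_of_eq_mul_fromBlocks_one_mul_conjTranspose [Fintype ι] [Fintype κ]
    [Fintype μ] [Fintype ν] [DecidableEq ι] [DecidableEq κ] [DecidableEq μ] [DecidableEq ν]
    {A : Matrix ι ι 𝕜} {V : Matrix ι (κ ⊕ μ) 𝕜} {A₁ : Matrix μ μ 𝕜} (hV : Vᴴ * V = 1)
    (hV' : V * Vᴴ = 1) (hA : A = V * (fromBlocks 1 0 0 A₁ : Matrix (κ ⊕ μ) (κ ⊕ μ) 𝕜) * Vᴴ)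
    {W : Matrix ι ν 𝕜} {d : ν → 𝕜} (hd : ∀ j, d j ≠ 1) (hW : A * W = W * diagonal d)
    (hW' : A * Aᴴ * W = W * diagonal d) :
    ∃ S : Matrix μ ν 𝕜, S.rank = W.rank ∧ A₁ * A₁ᴴ * S = S * diagonal d ∧
      A₁ * S = S * diagonal d := by
  have hAA : A * Aᴴ = V * (fromBlocks 1 0 0 (A₁ * A₁ᴴ) : Matrix (κ ⊕ μ) (κ ⊕ μ) 𝕜) * Vᴴ := by
    rw [hA]
    simp only [conjTranspose_mul, conjTranspose_conjTranspose, Matrix.mul_assoc]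
    rw [← Matrix.mul_assoc Vᴴ V, hV, Matrix.one_mul, ← Matrix.mul_assoc (fromBlocks _ _ _ _),
      fromBlocks_conjTranspose, fromBlocks_multiply]
    simp
  obtain ⟨hY₁, hY₂⟩ := toRows₁_eq_zero_of_fromBlocks_one_mul_eq_mul_diagonal hd
    (mul_conjTranspose_mul_eq_of_eq_mul_mul_conjTranspose hV hA hW)
  obtain ⟨-, hY₂'⟩ := toRows₁_eq_zero_of_fromBlocks_one_mul_eq_mul_diagonal hd
    (mul_conjTranspose_mul_eq_of_eq_mul_mul_conjTranspose hV hAA hW')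
  refine ⟨(Vᴴ * W).toRows₂, ?_, hY₂', hY₂⟩
  calc (Vᴴ * W).toRows₂.rank = (Vᴴ * W).rank := by
        rw [← rank_fromRows_zero (κ := κ), ← hY₁, fromRows_toRows]
    _ = W.rank := by
        rw [rank_mul_of_conjTranspose_mul_self_eq_one (by rwa [conjTranspose_conjTranspose])]

theorem submatrix_mem_unitaryGroup [Fintype ι] [DecidableEq ι] [Fintype κ] [DecidableEq κ]
    {V : Matrix ι κ 𝕜} (hV : Vᴴ * V = 1) (f : κ ≃ ι) :
    V.submatrix id f.symm ∈ unitaryGroup ι 𝕜 := by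
  rw [mem_unitaryGroup_iff', star_eq_conjTranspose, conjTranspose_submatrix,
    ← submatrix_mul _ _ _ _ _ Function.bijective_id, hV, submatrix_one_equiv]

theorem submatrix_mul_reindex_mul_star [Fintype ι] [Fintype κ] (V : Matrix ι κ 𝕜) (f : κ ≃ ι)
    (B : Matrix κ κ 𝕜) :
    V.submatrix id f.symm * reindex f f B * star (V.submatrix id f.symm) = V * B * Vᴴ := by
  rw [reindex_apply, star_eq_conjTranspose, conjTranspose_submatrix, submatrix_mul_equiv,
    submatrix_mul_equiv, submatrix_id_id]

end Matrix

open Matrix in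
/-- If A is the product of two orthogonal projections and is similar to
I_p ⊕ 0_q ⊕ diag(a₁,…,a_m) with a_j ∈ (0,1), then A is unitarily similar to I_p ⊕ A₁ and
there exists an (n−p)×m matrix S of rank m with A₁A₁*S = A₁S = S·diag(a₁,…,a_m). -/
theorem stmt10 (n p q m : ℕ) (A : Matrix (Fin n) (Fin n) ℂ) (a : Fin m → ℝ)
    (ha : ∀ j, a j ∈ Set.Ioo (0 : ℝ) 1)
    (hprod : ∃ P Q : Matrix (Fin n) (Fin n) ℂ, P.IsHermitian ∧ P * P = P ∧
      Q.IsHermitian ∧ Q * Q = Q ∧ A = P * Q)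
    (hsim : ∃ (T : Matrix (Fin n) (Fin n) ℂ) (e : (Fin p ⊕ (Fin q ⊕ Fin m)) ≃ Fin n),
      IsUnit T ∧ A = T * (Matrix.reindex e e
        (Matrix.fromBlocks 1 0 0
          (Matrix.fromBlocks 0 0 0 (Matrix.diagonal fun j => (a j : ℂ))))) * T⁻¹) :
    ∃ (A₁ : Matrix (Fin (n - p)) (Fin (n - p)) ℂ)
      (f : (Fin p ⊕ Fin (n - p)) ≃ Fin n) (U : Matrix (Fin n) (Fin n) ℂ),
      U ∈ Matrix.unitaryGroup (Fin n) ℂ ∧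
      A = U * (Matrix.reindex f f (Matrix.fromBlocks 1 0 0 A₁)) * star U ∧
      ∃ S : Matrix (Fin (n - p)) (Fin m) ℂ, S.rank = m ∧
        A₁ * A₁ᴴ * S = S * Matrix.diagonal (fun j => (a j : ℂ)) ∧
        A₁ * S = S * Matrix.diagonal (fun j => (a j : ℂ)) := by
  obtain ⟨P, Q, hP, hP2, hQ, hQ2, rfl⟩ := hprod
  obtain ⟨T, e, hT, hA⟩ := hsim
  have hP' : IsStarProjection P := ⟨hP2, hP⟩
  have hQ' : IsStarProjection Q := ⟨hQ2, hQ⟩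
  have ha₀ : ∀ j, (a j : ℂ) ≠ 0 := fun j => Complex.ofReal_ne_zero.mpr (ha j).1.ne'
  have ha₁ : ∀ j, (a j : ℂ) ≠ 1 := fun j => by exact_mod_cast (ha j).2.ne
  have hcols := mul_submatrix_eq_submatrix_mul_of_eq_mul_reindex_mul_inv hT e hA
  rw [← fromCols_toCols (T.submatrix id e), ← fromCols_toCols (T.submatrix id e).toCols₂] at hcols
  obtain ⟨hT₁, hT₃⟩ := mul_eq_of_mul_fromCols_eq_mul_fromBlocks hcols
  obtain ⟨V₁, V₂, C, hV, hV', rfl⟩ := exists_unitary_fromCols_of_rank_eq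
    (X := (T.submatrix id e).toCols₁)
    ((rank_submatrix_id_of_isUnit hT (e.injective.comp Sum.inl_injective)).trans
      (Fintype.card_fin p))
  have hAV := eq_fromCols_mul_fromBlocks_one_mul_conjTranspose (A := P * Q) hV hV'
    (by rw [← Matrix.mul_assoc, hT₁])
    (by rw [← Matrix.mul_assoc, conjTranspose_mul_mul_eq_self_of_isStarProjection hP' hQ' hT₁])
  obtain ⟨S, hS, hS₁, hS₂⟩ := exists_rank_eq_of_eq_mul_fromBlocks_one_mul_conjTranspose hV hV' hAV
    ha₁ hT₃ (mul_conjTranspose_mul_eq_mul_diagonal_of_isStarProjection hP' hQ' ha₀ hT₃)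
  have hpn : p + (q + m) = n := by simpa using Fintype.card_congr e
  let f : Fin p ⊕ Fin (n - p) ≃ Fin n := finSumFinEquiv.trans (finCongr (by omega))
  refine ⟨_, f, _, submatrix_mem_unitaryGroup hV f, by rwa [submatrix_mul_reindex_mul_star], S,
    ?_, hS₁, hS₂⟩
  rw [hS]
  exact (rank_submatrix_id_of_isUnit hT
    (e.injective.comp (Sum.inr_injective.comp Sum.inr_injective))).trans (Fintype.card_fin m)
end

section
/- Let A = [[A₁₁, A₁₂],[0, 0_{n−m}]] ∈ M_n where A₁₁ ∈ M_m is similar to D = diag(a₁,…,a_m) with 1 > a₁ ≥ … ≥ a_m > 0. If there exists an invertible contraction U₁₁ ∈ M_m with A₁₁U₁₁ = U₁₁D and U₁₁DU₁₁* ⪰ A₁₁A₁₁* + A₁₂A₁₂*, then A = PQ where P = [[U₁₁U₁₁*, 0],[0, 0_{n−m}]] and Q = [[(U₁₁*)⁻¹DU₁₁⁻¹, (U₁₁U₁₁*)⁻¹A₁₂],[A₁₂*(U₁₁U₁₁*)⁻¹, A₁₂*(U₁₁DU₁₁*)⁻¹A₁₂]] are positive semidefinite contractions. -/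
/-!
Put `N = U₁₁ D U₁₁ᴴ`, which is positive definite. The intertwining relation `A₁₁ U₁₁ = U₁₁ D`
gives `N⁻¹ A₁₁ = (U₁₁ U₁₁ᴴ)⁻¹`, and with it `Q = Wᴴ N⁻¹ W` for the row `W = [A₁₁ A₁₂]`, while
`P = Z Zᴴ` for the column `Z = [U₁₁; 0]`. Both are therefore positive semidefinite, `‖P‖ = ‖U₁₁‖²`,
and `‖Q‖ = ‖N^{-1/2} W Wᴴ N^{-1/2}‖ ≤ 1` because `W Wᴴ = A₁₁ A₁₁ᴴ + A₁₂ A₁₂ᴴ ≤ N`.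
-/

open scoped ComplexOrder Matrix MatrixOrder

open scoped Matrix.Norms.L2Operator

namespace Matrix

section Blocks

variable {R : Type*} [CommRing R] [StarRing R] {m n l : Type*}

-- Without the second ascription `*` would elaborate through `CStarMatrix`'s default instance.
lemma conjTranspose_fromRows_zero_mul_self [Fintype m] [Fintype l] (A : Matrix m n R) :
    (fromRows A (0 : Matrix l n R))ᴴ * fromRows A (0 : Matrix l n R) = Aᴴ * A := by
  rw [conjTranspose_fromRows_eq_fromCols_conjTranspose, fromCols_mul_fromRows,
    conjTranspose_zero, Matrix.zero_mul, add_zero]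

lemma fromRows_zero_mul_conjTranspose_self [Fintype n] (A : Matrix m n R) :
    fromRows A (0 : Matrix l n R) * (fromRows A 0)ᴴ =
      fromBlocks (A * Aᴴ) 0 0 (0 : Matrix l l R) := by
  rw [conjTranspose_fromRows_eq_fromCols_conjTranspose, fromRows_mul_fromCols,
    conjTranspose_zero, Matrix.mul_zero, Matrix.zero_mul, Matrix.zero_mul]

lemma fromCols_mul_conjTranspose_self [Fintype n] [Fintype l] (A : Matrix m n R)
    (B : Matrix m l R) : fromCols A B * (fromCols A B)ᴴ = A * Aᴴ + B * Bᴴ := by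
  rw [conjTranspose_fromCols_eq_fromRows_conjTranspose, fromCols_mul_fromRows]

end Blocks

section Norm

variable {m n l : Type*} [Fintype m] [Fintype n] [Fintype l] [DecidableEq n]

lemma l2_opNorm_self_mul_conjTranspose [DecidableEq m] (A : Matrix m n ℂ) :
    ‖A * Aᴴ‖ = ‖A‖ * ‖A‖ := by
  simpa only [conjTranspose_conjTranspose, l2_opNorm_conjTranspose] using
    l2_opNorm_conjTranspose_mul_self Aᴴ

lemma l2_opNorm_fromRows_zero (A : Matrix m n ℂ) : ‖fromRows A (0 : Matrix l n ℂ)‖ = ‖A‖ := by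
  have h := congrArg norm (conjTranspose_fromRows_zero_mul_self (l := l) A)
  rw [l2_opNorm_conjTranspose_mul_self, l2_opNorm_conjTranspose_mul_self] at h
  exact (mul_self_inj (norm_nonneg _) (norm_nonneg _)).mp h

lemma PosDef.exists_isUnit_isHermitian_mul_self_eq [DecidableEq m] {N : Matrix m m ℂ}
    (hN : N.PosDef) : ∃ R : Matrix m m ℂ, IsUnit R ∧ R.IsHermitian ∧ R * R = N :=
  ⟨CFC.sqrt N, (CFC.isUnit_sqrt_iff N hN.posSemidef.nonneg).mpr hN.isUnit,
    IsSelfAdjoint.of_nonneg (CFC.sqrt_nonneg N), CFC.sqrt_mul_sqrt_self N hN.posSemidef.nonneg⟩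

lemma l2_opNorm_conjTranspose_mul_inv_mul_le_one [DecidableEq m] {N : Matrix m m ℂ}
    (hN : N.PosDef) {W : Matrix m n ℂ} (hW : W * Wᴴ ≤ N) : ‖Wᴴ * N⁻¹ * W‖ ≤ 1 := by
  obtain ⟨R, hRu, hRh, rfl⟩ := hN.exists_isUnit_isHermitian_mul_self_eq
  have := hRu.invertible
  have hRinv : (R⁻¹)ᴴ = R⁻¹ := by rw [conjTranspose_nonsing_inv, hRh.eq]
  have hX : Wᴴ * (R * R)⁻¹ * W = (R⁻¹ * W)ᴴ * (R⁻¹ * W) := by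
    rw [conjTranspose_mul, hRinv, mul_inv_rev]
    simp only [Matrix.mul_assoc]
  have hXX : (R⁻¹ * W) * (R⁻¹ * W)ᴴ ≤ 1 :=
    calc (R⁻¹ * W) * (R⁻¹ * W)ᴴ = R⁻¹ * (W * Wᴴ) * R⁻¹ := by
          rw [conjTranspose_mul, hRinv]
          simp only [Matrix.mul_assoc]
      _ ≤ R⁻¹ * (R * R) * R⁻¹ := IsSelfAdjoint.conjugate_le_conjugate hW hRinv
      _ = 1 := by simp
  rw [hX, l2_opNorm_conjTranspose_mul_self, ← l2_opNorm_self_mul_conjTranspose]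
  exact (CStarAlgebra.norm_le_one_iff_of_nonneg _
    (posSemidef_self_mul_conjTranspose _).nonneg).mpr hXX

end Norm

section Similar

variable {K : Type*} [Field K] {m n : Type*} [Fintype m] [DecidableEq m] {U D A : Matrix m m K}

lemma eq_mul_mul_inv_of_mul_eq (hU : IsUnit U) (h : A * U = U * D) : A = U * D * U⁻¹ := by
  have := hU.invertible
  rw [← h, mul_inv_cancel_right_of_invertible]

variable [StarRing K]

lemma inv_mul_mul_conjTranspose_mul_of_mul_eq (hU : IsUnit U) (hD : IsUnit D)
    (h : A * U = U * D) : (U * D * Uᴴ)⁻¹ * A = (U * Uᴴ)⁻¹ := by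
  have := hU.invertible
  have := hD.invertible
  rw [eq_mul_mul_inv_of_mul_eq hU h, mul_inv_rev, mul_inv_rev, mul_inv_rev]
  simp only [Matrix.mul_assoc, inv_mul_cancel_left_of_invertible]

lemma fromBlocks_eq_conjTranspose_fromCols_mul_inv_mul [Fintype n] (hU : IsUnit U)
    (hD : IsUnit D) (hDH : Dᴴ = D) (h : A * U = U * D) (B : Matrix m n K) :
    fromBlocks ((Uᴴ)⁻¹ * D * U⁻¹) ((U * Uᴴ)⁻¹ * B) (Bᴴ * (U * Uᴴ)⁻¹)
        (Bᴴ * (U * D * Uᴴ)⁻¹ * B) =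
      (fromCols A B)ᴴ * (U * D * Uᴴ)⁻¹ * fromCols A B := by
  have := hU.invertible
  have hNA := inv_mul_mul_conjTranspose_mul_of_mul_eq hU hD h
  have hAN : Aᴴ * (U * D * Uᴴ)⁻¹ = (U * Uᴴ)⁻¹ := by
    simpa [conjTranspose_nonsing_inv, Matrix.mul_assoc, hDH] using congrArg conjTranspose hNA
  rw [conjTranspose_fromCols_eq_fromRows_conjTranspose, fromRows_mul, fromRows_mul_fromCols,
    hAN, Matrix.mul_assoc Bᴴ _ A, hNA]
  congr 1
  rw [eq_mul_mul_inv_of_mul_eq hU h, mul_inv_rev]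
  simp only [Matrix.mul_assoc, inv_mul_cancel_left_of_invertible]

end Similar

end Matrix

open Matrix

theorem stmt12_general (m k : ℕ) (A₁₁ : Matrix (Fin m) (Fin m) ℂ) (A₁₂ : Matrix (Fin m) (Fin k) ℂ)
    (a : Fin m → ℝ) (ha : ∀ i, 0 < a i ∧ a i < 1)
    (D : Matrix (Fin m) (Fin m) ℂ) (hD : D = Matrix.diagonal fun i => (a i : ℂ))
    (U₁₁ : Matrix (Fin m) (Fin m) ℂ) (hU : IsUnit U₁₁) (hU1 : ‖U₁₁‖ ≤ 1)
    (hcomm : A₁₁ * U₁₁ = U₁₁ * D)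
    (hloew : (U₁₁ * D * U₁₁ᴴ - (A₁₁ * A₁₁ᴴ + A₁₂ * A₁₂ᴴ)).PosSemidef) :
    let P : Matrix (Fin m ⊕ Fin k) (Fin m ⊕ Fin k) ℂ :=
      Matrix.fromBlocks (U₁₁ * U₁₁ᴴ) 0 0 0
    let Q : Matrix (Fin m ⊕ Fin k) (Fin m ⊕ Fin k) ℂ :=
      Matrix.fromBlocks ((U₁₁ᴴ)⁻¹ * D * U₁₁⁻¹) ((U₁₁ * U₁₁ᴴ)⁻¹ * A₁₂)
        (A₁₂ᴴ * (U₁₁ * U₁₁ᴴ)⁻¹) (A₁₂ᴴ * (U₁₁ * D * U₁₁ᴴ)⁻¹ * A₁₂)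
    P.PosSemidef ∧ ‖P‖ ≤ 1 ∧ Q.PosSemidef ∧ ‖Q‖ ≤ 1 ∧
      Matrix.fromBlocks A₁₁ A₁₂ 0 0 = P * Q := by
  intro P Q
  have hDpd : D.PosDef := hD ▸ PosDef.diagonal fun i => by exact_mod_cast (ha i).1
  have hNpd : (U₁₁ * D * U₁₁ᴴ).PosDef :=
    hDpd.mul_mul_conjTranspose_same (vecMul_injective_iff_isUnit.mpr hU)
  have hP : P = fromRows U₁₁ 0 * (fromRows U₁₁ 0)ᴴ :=
    (fromRows_zero_mul_conjTranspose_self U₁₁).symm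
  have hQ : Q = (fromCols A₁₁ A₁₂)ᴴ * (U₁₁ * D * U₁₁ᴴ)⁻¹ * fromCols A₁₁ A₁₂ :=
    fromBlocks_eq_conjTranspose_fromCols_mul_inv_mul hU hDpd.isUnit hDpd.1 hcomm A₁₂
  refine ⟨hP ▸ posSemidef_self_mul_conjTranspose _, ?_,
    hQ ▸ hNpd.inv.posSemidef.conjTranspose_mul_mul_same _, ?_, ?_⟩
  · rw [hP, l2_opNorm_self_mul_conjTranspose, l2_opNorm_fromRows_zero]
    exact mul_le_one₀ hU1 (norm_nonneg _) hU1
  · rw [hQ]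
    refine l2_opNorm_conjTranspose_mul_inv_mul_le_one hNpd ?_
    rwa [le_iff, fromCols_mul_conjTranspose_self]
  · have := hU.invertible
    have := invertibleMul U₁₁ U₁₁ᴴ
    rw [fromBlocks_multiply, mul_inv_cancel_left_of_invertible,
      eq_mul_mul_inv_of_mul_eq hU hcomm]
    simp [Matrix.mul_assoc]

/-- With A = [[A₁₁,A₁₂],[0,0]], A₁₁ similar to D = diag(a₁ ≥ … ≥ a_m) ⊆ (0,1),
if there is an invertible contraction U₁₁ with A₁₁U₁₁ = U₁₁D and
U₁₁DU₁₁* ⪰ A₁₁A₁₁* + A₁₂A₁₂*, then A = PQ for explicit positive semidefinite contractions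
P and Q. -/
theorem stmt12 (m k : ℕ) (A₁₁ : Matrix (Fin m) (Fin m) ℂ) (A₁₂ : Matrix (Fin m) (Fin k) ℂ)
    (a : Fin m → ℝ) (ha : ∀ i, 0 < a i ∧ a i < 1) (hmono : Antitone a)
    (D : Matrix (Fin m) (Fin m) ℂ) (hD : D = Matrix.diagonal fun i => (a i : ℂ))
    (hsim : ∃ S : Matrix (Fin m) (Fin m) ℂ, IsUnit S ∧ A₁₁ = S * D * S⁻¹)
    (U₁₁ : Matrix (Fin m) (Fin m) ℂ) (hU : IsUnit U₁₁) (hU1 : ‖U₁₁‖ ≤ 1)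
    (hcomm : A₁₁ * U₁₁ = U₁₁ * D)
    (hloew : (U₁₁ * D * U₁₁ᴴ - (A₁₁ * A₁₁ᴴ + A₁₂ * A₁₂ᴴ)).PosSemidef) :
    let P : Matrix (Fin m ⊕ Fin k) (Fin m ⊕ Fin k) ℂ :=
      Matrix.fromBlocks (U₁₁ * U₁₁ᴴ) 0 0 0
    let Q : Matrix (Fin m ⊕ Fin k) (Fin m ⊕ Fin k) ℂ :=
      Matrix.fromBlocks ((U₁₁ᴴ)⁻¹ * D * U₁₁⁻¹) ((U₁₁ * U₁₁ᴴ)⁻¹ * A₁₂)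
        (A₁₂ᴴ * (U₁₁ * U₁₁ᴴ)⁻¹) (A₁₂ᴴ * (U₁₁ * D * U₁₁ᴴ)⁻¹ * A₁₂)
    P.PosSemidef ∧ ‖P‖ ≤ 1 ∧ Q.PosSemidef ∧ ‖Q‖ ≤ 1 ∧
      Matrix.fromBlocks A₁₁ A₁₂ 0 0 = P * Q :=
  stmt12_general m k A₁₁ A₁₂ a ha D hD U₁₁ hU hU1 hcomm hloew
end

section
/- Let G be an m×m Hermitian matrix and M an m×m Hermitian matrix. Then the nearest matrix (in Frobenius norm) to G in the set {Γ Hermitian : M ⪰ Γ} is M − (M−G)⁺, where X⁺ = (X + √(X²))/2 denotes the positive semidefinite part of a Hermitian matrix X. -/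
/-!
Write `A = M - G = A⁺ - A⁻` with `A⁺, A⁻ ⪰ 0` and `A⁺ A⁻ = 0`; the hypotheses on `S` force
`S = |A|`, so the candidate is `M - A⁺` and its distance to `G` is `‖A⁻‖`. For any feasible `Γ`,
put `B = M - Γ ⪰ 0`; then `G - Γ = (B - A⁺) + A⁻` and the cross term `tr ((B - A⁺) A⁻) = tr (B A⁻)`
is nonnegative, so `‖G - Γ‖² ≥ ‖A⁻‖²`.
-/

open scoped ComplexOrder Matrix MatrixOrder

namespace Matrix

variable {𝕜 : Type*} [RCLike 𝕜] {n : Type*} [Fintype n]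

lemma sum_norm_sq_eq_re_trace_mul_conjTranspose {m : Type*} [Fintype m] (X : Matrix m n 𝕜) :
    ∑ i, ∑ j, ‖X i j‖ ^ 2 = RCLike.re (X * Xᴴ).trace := by
  simp only [trace, diag, mul_apply, conjTranspose_apply, map_sum, RCLike.star_def,
    RCLike.mul_conj, ← RCLike.ofReal_pow, RCLike.ofReal_re]

lemma IsHermitian.sum_norm_sq_add {D N : Matrix n n 𝕜} (hD : D.IsHermitian)
    (hN : N.IsHermitian) :
    ∑ i, ∑ j, ‖(D + N) i j‖ ^ 2 =
      ∑ i, ∑ j, ‖D i j‖ ^ 2 + 2 * RCLike.re (D * N).trace + ∑ i, ∑ j, ‖N i j‖ ^ 2 := by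
  simp only [sum_norm_sq_eq_re_trace_mul_conjTranspose, (hD.add hN).eq, hD.eq, hN.eq, add_mul,
    mul_add, trace_add, trace_mul_comm N D, map_add]
  ring

variable [DecidableEq n]

lemma PosSemidef.trace_mul_nonneg {A B : Matrix n n 𝕜} (hA : A.PosSemidef) (hB : B.PosSemidef) :
    0 ≤ (A * B).trace := by
  have hsqrt : (CFC.sqrt B).IsHermitian :=
    (nonneg_iff_posSemidef.mp (CFC.sqrt_nonneg B)).isHermitian
  have h : (CFC.sqrt B * A * (CFC.sqrt B)ᴴ).trace = (A * B).trace := by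
    rw [hsqrt.eq, trace_mul_cycle, CFC.sqrt_mul_sqrt_self B (nonneg_iff_posSemidef.mpr hB),
      trace_mul_comm]
  exact h ▸ (hA.mul_mul_conjTranspose_same _).trace_nonneg

lemma sum_norm_sq_negPart_le {A B : Matrix n n 𝕜} (hA : A.IsHermitian) (hB : B.PosSemidef) :
    ∑ i, ∑ j, ‖A⁻ i j‖ ^ 2 ≤ ∑ i, ∑ j, ‖(B - A) i j‖ ^ 2 := by
  have hP : A⁺.PosSemidef := nonneg_iff_posSemidef.mp (CFC.posPart_nonneg A)
  have hN : A⁻.PosSemidef := nonneg_iff_posSemidef.mp (CFC.negPart_nonneg A)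
  have hsplit : B - A = (B - A⁺) + A⁻ := by
    conv_lhs => rw [← CFC.posPart_sub_negPart A hA.isSelfAdjoint]
    abel
  have hcross : (B - A⁺) * A⁻ = B * A⁻ := by
    rw [sub_mul, CFC.posPart_mul_negPart, sub_zero]
  have hD : (B - A⁺).IsHermitian := hB.isHermitian.sub hP.isHermitian
  rw [hsplit, hD.sum_norm_sq_add hN.isHermitian, hcross]
  have hBN : 0 ≤ RCLike.re (B * A⁻).trace := (RCLike.nonneg_iff.mp (hB.trace_mul_nonneg hN)).1
  have hD_sq : 0 ≤ ∑ i, ∑ j, ‖(B - A⁺) i j‖ ^ 2 := by positivity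
  linarith

lemma IsHermitian.half_smul_add_eq_posPart {A S : Matrix n n 𝕜} (hA : A.IsHermitian)
    (hS : S.PosSemidef) (hS2 : S * S = A * A) : (2⁻¹ : 𝕜) • (A + S) = A⁺ := by
  have habs : CFC.abs A = S := by
    rw [CFC.abs, CFC.sqrt_eq_iff _ _ (star_mul_self_nonneg A) (nonneg_iff_posSemidef.mpr hS),
      hS2, hA.isSelfAdjoint.star_eq]
  rw [add_comm, ← habs, CFC.abs_add_self A hA.isSelfAdjoint, two_nsmul, ← two_smul 𝕜,
    smul_smul, inv_mul_cancel₀ two_ne_zero, one_smul]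

end Matrix

/-- For Hermitian G and M, the nearest matrix (in Frobenius norm) to G in
{Γ Hermitian : M ⪰ Γ} is M − (M−G)⁺, where X⁺ = (X + √(X²))/2.  Here S is the unique
positive semidefinite square root of (M−G)². -/
theorem stmt18 (m : ℕ) (G M : Matrix (Fin m) (Fin m) ℂ)
    (hG : G.IsHermitian) (hM : M.IsHermitian)
    (S : Matrix (Fin m) (Fin m) ℂ) (hS : S.PosSemidef)
    (hS2 : S * S = (M - G) * (M - G)) :
    IsLeast {r : ℝ | ∃ Γ : Matrix (Fin m) (Fin m) ℂ, Γ.IsHermitian ∧ (M - Γ).PosSemidef ∧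
        r = Real.sqrt (∑ i, ∑ j, ‖(G - Γ) i j‖ ^ 2)}
      (Real.sqrt (∑ i, ∑ j,
        ‖(G - (M - (2⁻¹ : ℂ) • ((M - G) + S))) i j‖ ^ 2)) := by
  have hA : (M - G).IsHermitian := hM.sub hG
  have hP : (M - G)⁺.PosSemidef := Matrix.nonneg_iff_posSemidef.mp (CFC.posPart_nonneg _)
  rw [hA.half_smul_add_eq_posPart hS hS2]
  refine ⟨⟨M - (M - G)⁺, hM.sub hP.isHermitian, by rwa [sub_sub_cancel], rfl⟩, ?_⟩
  rintro r ⟨Γ, -, hB, rfl⟩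
  have hnear : G - (M - (M - G)⁺) = (M - G)⁻ := by
    linear_combination (norm := module) CFC.posPart_sub_negPart (M - G) hA.isSelfAdjoint
  rw [hnear, show G - Γ = (M - Γ) - (M - G) by abel]
  exact Real.sqrt_le_sqrt (Matrix.sum_norm_sq_negPart_le hA hB)
end
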